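/- Assume the noncommutative Grothendieck inequality: for a bounded bilinear form V on M_{n_A} × M_{n_B} there exist states φ₁, φ₂ on M_{n_A} and ψ₁, ψ₂ on M_{n_B} with |V(x,y)| ≤ ‖V‖ (φ₁(x*x)+φ₂(xx*))^{1/2} (ψ₁(y*y)+ψ₂(yy*))^{1/2} for all x, y. Then for any z ∈ M_{n_A n_B} with n_A ≤ n_B, ‖z‖₁ ≤ 2 n_A ‖V_z‖, where V_z(a,b) = tr(z(a⊗b)) and ‖V_z‖ = sup{|V_z(a,b)| : ‖a‖_∞ ≤ 1, ‖b‖_∞ ≤ 1}. -/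

import Mathlib

open Matrix
open scoped ComplexOrder Kronecker

noncomputable def opNorm {n : Type*} [Fintype n] [DecidableEq n] (A : Matrix n n ℂ) : ℝ :=
  ‖Matrix.toEuclideanCLM (𝕜 := ℂ) A‖

noncomputable def traceNorm {n : Type*} [Fintype n] [DecidableEq n] (A : Matrix n n ℂ) : ℝ :=
  ((Matrix.posSemidef_conjTranspose_mul_self A).1.eigenvectorUnitary.1 *
    diagonal (((↑) : ℝ → ℂ) ∘ Real.sqrt ∘ (Matrix.posSemidef_conjTranspose_mul_self A).1.eigenvalues) *
    (star (Matrix.posSemidef_conjTranspose_mul_self A).1.eigenvectorUnitary : Matrix n n ℂ)).trace.re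

noncomputable def epsNorm {nA nB : ℕ} (z : Matrix (Fin nA × Fin nB) (Fin nA × Fin nB) ℂ) : ℝ :=
  sSup {r : ℝ | ∃ a : Matrix (Fin nA) (Fin nA) ℂ, ∃ b : Matrix (Fin nB) (Fin nB) ℂ,
    opNorm a ≤ 1 ∧ opNorm b ≤ 1 ∧ r = ‖(z * (a ⊗ₖ b)).trace‖}

noncomputable def saEpsNorm {nA nB : ℕ} (z : Matrix (Fin nA × Fin nB) (Fin nA × Fin nB) ℂ) : ℝ :=
  sSup {r : ℝ | ∃ a : Matrix (Fin nA) (Fin nA) ℂ, ∃ b : Matrix (Fin nB) (Fin nB) ℂ,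
    a.IsHermitian ∧ b.IsHermitian ∧ opNorm a ≤ 1 ∧ opNorm b ≤ 1 ∧
    r = ‖(z * (a ⊗ₖ b)).trace‖}

/-- A finite family of matrices is a POVM if each member is positive semidefinite
and they sum to the identity. -/
def IsPOVM {n k : ℕ} (e : Fin k → Matrix (Fin n) (Fin n) ℂ) : Prop :=
  (∀ i, (e i).PosSemidef) ∧ ∑ i, e i = 1

/-- The local-operations (LO) distinguishability norm of a Hermitian matrix on a
bipartite system: the supremum over product POVMs of `∑ᵢⱼ |tr((eᵢ ⊗ fⱼ) z)|`. -/
noncomputable def LOnorm {nA nB : ℕ} (z : Matrix (Fin nA × Fin nB) (Fin nA × Fin nB) ℂ) : ℝ :=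
  sSup {r : ℝ | ∃ (kA kB : ℕ) (e : Fin kA → Matrix (Fin nA) (Fin nA) ℂ)
    (f : Fin kB → Matrix (Fin nB) (Fin nB) ℂ), IsPOVM e ∧ IsPOVM f ∧
    r = ∑ i, ∑ j, ‖((e i ⊗ₖ f j) * z).trace‖}

/-! Let `W = |z|⁻¹ zᴴ` be the polar contraction of `z`, so that `‖z‖₁ = Re tr (z W)` and
`‖W‖_∞ ≤ 1`. Writing `W = ∑ᵢⱼ eᵢⱼ ⊗ Wᵢⱼ` in blocks gives `tr (z W) = ∑ᵢⱼ V_z (eᵢⱼ, Wᵢⱼ)`, and the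
Grothendieck inequality bounds each term by
`‖V_z‖ (φ₁ⱼⱼ + φ₂ᵢᵢ)^{1/2} (ψ₁ (Wᵢⱼᴴ Wᵢⱼ) + ψ₂ (Wᵢⱼ Wᵢⱼᴴ))^{1/2}`.
The column sums `∑ᵢ Wᵢⱼᴴ Wᵢⱼ` and row sums `∑ⱼ Wᵢⱼ Wᵢⱼᴴ` are diagonal blocks of `Wᴴ W` and
`W Wᴴ`, hence `≤ 1`, so both factors sum to at most `2 n_A` over `(i, j)`, and Cauchy–Schwarz
gives `‖z‖₁ ≤ ‖V_z‖ · 2 n_A`. -/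

open scoped MatrixOrder Matrix.Norms.L2Operator

lemma sum_sum_sqrt_add_mul_sqrt_add_le {ι : Type*} [Fintype ι] {a b : ι → ℝ} {c d : ι → ι → ℝ}
    (ha : ∀ j, 0 ≤ a j) (hb : ∀ i, 0 ≤ b i) (hc : ∀ i j, 0 ≤ c i j) (hd : ∀ i j, 0 ≤ d i j)
    (ha₁ : ∑ j, a j ≤ 1) (hb₁ : ∑ i, b i ≤ 1) (hc₁ : ∀ j, ∑ i, c i j ≤ 1)
    (hd₁ : ∀ i, ∑ j, d i j ≤ 1) :
    ∑ i, ∑ j, √(a j + b i) * √(c i j + d i j) ≤ 2 * Fintype.card ι := by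
  have hab : ∑ p : ι × ι, (a p.2 + b p.1) ≤ 2 * Fintype.card ι := by
    rw [Finset.sum_add_distrib, Fintype.sum_prod_type, Fintype.sum_prod_type]
    simp only [Finset.sum_const, Finset.card_univ, nsmul_eq_mul, ← Finset.mul_sum]
    nlinarith [(Fintype.card ι).cast_nonneg (α := ℝ)]
  have hcd : ∑ p : ι × ι, (c p.1 p.2 + d p.1 p.2) ≤ 2 * Fintype.card ι := by
    rw [Finset.sum_add_distrib, Fintype.sum_prod_type, Fintype.sum_prod_type, Finset.sum_comm]
    calc _ ≤ ∑ _j : ι, (1 : ℝ) + ∑ _i : ι, (1 : ℝ) :=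
          add_le_add (Finset.sum_le_sum fun j _ => hc₁ j) (Finset.sum_le_sum fun i _ => hd₁ i)
      _ = 2 * Fintype.card ι := by
          simp only [Finset.sum_const, Finset.card_univ, nsmul_eq_mul, mul_one]
          ring
  calc ∑ i, ∑ j, √(a j + b i) * √(c i j + d i j)
      = ∑ p : ι × ι, √(a p.2 + b p.1) * √(c p.1 p.2 + d p.1 p.2) := Fintype.sum_prod_type' _ |>.symm
    _ ≤ √(∑ p : ι × ι, (a p.2 + b p.1)) * √(∑ p : ι × ι, (c p.1 p.2 + d p.1 p.2)) :=
        Real.sum_sqrt_mul_sqrt_le _ (fun p => add_nonneg (ha _) (hb _))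
          (fun p => add_nonneg (hc _ _) (hd _ _))
    _ ≤ √(2 * Fintype.card ι) * √(2 * Fintype.card ι) := by gcongr
    _ = 2 * Fintype.card ι := Real.mul_self_sqrt (by positivity)

namespace Matrix

section State

variable {n : Type*} [Fintype n]

def IsState (ρ : Matrix n n ℂ) : Prop := ρ.PosSemidef ∧ ρ.trace = 1

lemma IsState.sum_re_diag {ρ : Matrix n n ℂ} (hρ : IsState ρ) : ∑ i, (ρ i i).re = 1 := by
  simpa [trace, Complex.re_sum] using congrArg Complex.re hρ.2

variable [DecidableEq n]

lemma PosSemidef.re_trace_mul_nonneg {ρ M : Matrix n n ℂ} (hρ : ρ.PosSemidef) (hM : 0 ≤ M) :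
    0 ≤ (ρ * M).trace.re := by
  obtain ⟨B, rfl⟩ := CStarAlgebra.nonneg_iff_eq_star_mul_self.mp hM
  rw [← mul_assoc, trace_mul_comm, ← mul_assoc, star_eq_conjTranspose]
  exact (Complex.nonneg_iff.mp (hρ.mul_mul_conjTranspose_same B).trace_nonneg).1

lemma IsState.re_trace_mul_le_one {ρ M : Matrix n n ℂ} (hρ : IsState ρ) (hM : M ≤ 1) :
    (ρ * M).trace.re ≤ 1 := by
  have := hρ.1.re_trace_mul_nonneg (sub_nonneg.mpr hM)
  rwa [mul_sub, mul_one, trace_sub, hρ.2, Complex.sub_re, Complex.one_re, sub_nonneg] at this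

lemma IsState.sum_re_trace_mul_le_one {ι : Type*} {ρ : Matrix n n ℂ} (hρ : IsState ρ)
    {s : Finset ι} {M : ι → Matrix n n ℂ} (hM : ∑ i ∈ s, M i ≤ 1) :
    ∑ i ∈ s, (ρ * M i).trace.re ≤ 1 := by
  simpa only [Finset.mul_sum, trace_sum, Complex.re_sum] using hρ.re_trace_mul_le_one hM

end State

section Contraction

variable {n : Type*} [Fintype n] [DecidableEq n]

lemma traceNorm_eq_re_trace_cfc_sqrt (A : Matrix n n ℂ) :
    traceNorm A = (cfc Real.sqrt (Aᴴ * A)).trace.re := by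
  rw [(isHermitian_conjTranspose_mul_self A).cfc_eq]
  rfl

/-- The witness is the polar factor `W = |z|⁻¹ zᴴ`; since `(0 : ℝ)⁻¹ = 0`, `|z|⁻¹` is the
Moore–Penrose inverse, so `W W*` is the projection onto the range of `|z|`. -/
lemma exists_opNorm_le_one_traceNorm_eq (z : Matrix n n ℂ) :
    ∃ W : Matrix n n ℂ, opNorm W ≤ 1 ∧ traceNorm z = (z * W).trace.re := by
  set P := zᴴ * z
  have hP : IsSelfAdjoint P := isHermitian_conjTranspose_mul_self z
  have hcont (f : ℝ → ℝ) : ContinuousOn f (spectrum ℝ P) := P.finite_real_spectrum.continuousOn f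
  have hsqrt : (fun t : ℝ => (√t)⁻¹ * t) = Real.sqrt := by
    ext t
    rw [inv_mul_eq_div, Real.div_sqrt]
  set S := cfc (fun t : ℝ => (√t)⁻¹) P
  have hS : IsSelfAdjoint S := cfc_predicate _ _
  have hSP : S * P = cfc Real.sqrt P := by
    rw [← cfc_id' ℝ P hP, ← cfc_mul _ _ _ (hcont _) (hcont _), hsqrt, cfc_id' ℝ P hP]
  refine ⟨S * zᴴ, ?_, ?_⟩
  · have hWW : (S * zᴴ) * star (S * zᴴ) = cfc (fun t : ℝ => √t * (√t)⁻¹) P := by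
      rw [star_mul, star_eq_conjTranspose zᴴ, conjTranspose_conjTranspose, hS.star_eq,
        mul_assoc, ← mul_assoc zᴴ, ← mul_assoc, hSP, ← cfc_mul _ _ _ (hcont _) (hcont _)]
    have h : ‖(S * zᴴ) * star (S * zᴴ)‖ ≤ 1 := by
      rw [CStarAlgebra.norm_le_one_iff_of_nonneg _ (mul_star_self_nonneg _), hWW]
      exact cfc_le_one _ _ fun t _ => mul_inv_le_one
    rw [CStarRing.norm_self_mul_star] at h
    change ‖S * zᴴ‖ ≤ 1
    nlinarith [norm_nonneg (S * zᴴ)]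
  · rw [traceNorm_eq_re_trace_cfc_sqrt, ← hSP, ← mul_assoc S, trace_mul_cycle, mul_assoc]

lemma conjTranspose_mul_self_le_one {W : Matrix n n ℂ} (hW : opNorm W ≤ 1) : Wᴴ * W ≤ 1 := by
  refine (CStarAlgebra.norm_le_one_iff_of_nonneg _ (star_mul_self_nonneg W)).mp ?_
  rw [CStarRing.norm_star_mul_self]
  exact mul_le_one₀ hW (norm_nonneg W) hW

lemma mul_conjTranspose_self_le_one {W : Matrix n n ℂ} (hW : opNorm W ≤ 1) : W * Wᴴ ≤ 1 := by
  refine (CStarAlgebra.norm_le_one_iff_of_nonneg _ (mul_star_self_nonneg W)).mp ?_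
  rw [CStarRing.norm_self_mul_star]
  exact mul_le_one₀ hW (norm_nonneg W) hW

end Contraction

lemma submatrix_le_one {m n 𝕜 : Type*} [DecidableEq m] [DecidableEq n] [RCLike 𝕜]
    {M : Matrix n n 𝕜} (hM : M ≤ 1) {f : m → n} (hf : f.Injective) : M.submatrix f f ≤ 1 := by
  rw [le_iff, ← submatrix_one f hf]
  exact hM.submatrix f

section Blocks

variable {m n α : Type*} [Fintype m]

lemma sum_single_kronecker_submatrix [DecidableEq m] [Semiring α] (W : Matrix (m × n) (m × n) α) :
    ∑ i, ∑ j, single i j 1 ⊗ₖ W.submatrix (Prod.mk i) (Prod.mk j) = W := by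
  ext ⟨p, q⟩ ⟨r, s⟩
  simp [sum_apply, single, ite_and, Finset.sum_ite_eq']

variable [Fintype n]

lemma sum_conjTranspose_mul_submatrix [NonUnitalSemiring α] [StarRing α]
    (W : Matrix (m × n) (m × n) α) (j : m) :
    ∑ i, (W.submatrix (Prod.mk i) (Prod.mk j))ᴴ * W.submatrix (Prod.mk i) (Prod.mk j) =
      (Wᴴ * W).submatrix (Prod.mk j) (Prod.mk j) := by
  ext q s
  simp only [sum_apply, mul_apply, conjTranspose_apply, submatrix_apply, Fintype.sum_prod_type]

lemma sum_mul_conjTranspose_submatrix [NonUnitalSemiring α] [StarRing α]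
    (W : Matrix (m × n) (m × n) α) (i : m) :
    ∑ j, W.submatrix (Prod.mk i) (Prod.mk j) * (W.submatrix (Prod.mk i) (Prod.mk j))ᴴ =
      (W * Wᴴ).submatrix (Prod.mk i) (Prod.mk i) := by
  simpa [conjTranspose_submatrix] using sum_conjTranspose_mul_submatrix Wᴴ i

variable [DecidableEq m] [DecidableEq n]

lemma sum_conjTranspose_mul_submatrix_le_one {W : Matrix (m × n) (m × n) ℂ}
    (hW : opNorm W ≤ 1) (j : m) :
    ∑ i, (W.submatrix (Prod.mk i) (Prod.mk j))ᴴ * W.submatrix (Prod.mk i) (Prod.mk j) ≤ 1 := by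
  rw [sum_conjTranspose_mul_submatrix]
  exact submatrix_le_one (conjTranspose_mul_self_le_one hW) (Prod.mk_right_injective j)

lemma sum_mul_conjTranspose_submatrix_le_one {W : Matrix (m × n) (m × n) ℂ}
    (hW : opNorm W ≤ 1) (i : m) :
    ∑ j, W.submatrix (Prod.mk i) (Prod.mk j) * (W.submatrix (Prod.mk i) (Prod.mk j))ᴴ ≤ 1 := by
  rw [sum_mul_conjTranspose_submatrix]
  exact submatrix_le_one (mul_conjTranspose_self_le_one hW) (Prod.mk_right_injective i)

end Blocks

section TraceKroneckerForm

variable {m n R : Type*} [Fintype m] [Fintype n] [CommSemiring R]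

/-- The paper's `V_z`. -/
def traceKroneckerForm (z : Matrix (m × n) (m × n) R) : Matrix m m R →ₗ[R] Matrix n n R →ₗ[R] R :=
  kroneckerBilinear.compr₂ ((traceLinearMap (m × n) R R).comp (LinearMap.mulLeft R z))

lemma traceKroneckerForm_apply (z : Matrix (m × n) (m × n) R) (a : Matrix m m R)
    (b : Matrix n n R) : traceKroneckerForm z a b = (z * (a ⊗ₖ b)).trace :=
  rfl

lemma trace_mul_eq_sum_traceKroneckerForm [DecidableEq m] (z W : Matrix (m × n) (m × n) R) :
    (z * W).trace =
      ∑ i, ∑ j, traceKroneckerForm z (single i j 1) (W.submatrix (Prod.mk i) (Prod.mk j)) := by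
  conv_lhs => rw [← sum_single_kronecker_submatrix W]
  simp only [Finset.mul_sum, trace_sum, traceKroneckerForm_apply]

end TraceKroneckerForm

section Grothendieck

variable {m n : Type*} [Fintype m] [DecidableEq m]

lemma trace_mul_conjTranspose_single_mul_single {α : Type*} [Semiring α] [StarRing α]
    (ρ : Matrix m m α) (i j : m) :
    (ρ * ((single i j 1)ᴴ * single i j 1)).trace = ρ j j := by
  simp [trace_mul_single]

lemma trace_mul_single_mul_conjTranspose_single {α : Type*} [Semiring α] [StarRing α]
    (ρ : Matrix m m α) (i j : m) :
    (ρ * (single i j 1 * (single i j 1)ᴴ)).trace = ρ i i := by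
  simp [trace_mul_single]

variable [Fintype n] [DecidableEq n]

lemma norm_trace_mul_le_of_grothendieck {z : Matrix (m × n) (m × n) ℂ} {K : ℝ} (hK : 0 ≤ K)
    {φ₁ φ₂ : Matrix m m ℂ} {ψ₁ ψ₂ : Matrix n n ℂ} (hφ₁ : IsState φ₁) (hφ₂ : IsState φ₂)
    (hψ₁ : IsState ψ₁) (hψ₂ : IsState ψ₂)
    (hV : ∀ x y, ‖traceKroneckerForm z x y‖ ≤
      K * √((φ₁ * (xᴴ * x)).trace.re + (φ₂ * (x * xᴴ)).trace.re)
        * √((ψ₁ * (yᴴ * y)).trace.re + (ψ₂ * (y * yᴴ)).trace.re))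
    {W : Matrix (m × n) (m × n) ℂ} (hW : opNorm W ≤ 1) :
    ‖(z * W).trace‖ ≤ 2 * Fintype.card m * K := by
  set B : m → m → Matrix n n ℂ := fun i j => W.submatrix (Prod.mk i) (Prod.mk j)
  calc ‖(z * W).trace‖
      ≤ ∑ i, ∑ j, ‖traceKroneckerForm z (single i j 1) (B i j)‖ := by
        rw [trace_mul_eq_sum_traceKroneckerForm]
        exact (norm_sum_le _ _).trans (Finset.sum_le_sum fun i _ => norm_sum_le _ _)
    _ ≤ ∑ i, ∑ j, K * (√((φ₁ j j).re + (φ₂ i i).re) *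
          √((ψ₁ * ((B i j)ᴴ * B i j)).trace.re + (ψ₂ * (B i j * (B i j)ᴴ)).trace.re)) := by
        gcongr with i _ j _
        simpa only [trace_mul_conjTranspose_single_mul_single,
          trace_mul_single_mul_conjTranspose_single, mul_assoc] using hV (single i j 1) (B i j)
    _ ≤ K * (2 * Fintype.card m) := by
        simp only [← Finset.mul_sum]
        gcongr
        exact sum_sum_sqrt_add_mul_sqrt_add_le
          (fun _ => (Complex.nonneg_iff.mp hφ₁.1.diag_nonneg).1)
          (fun _ => (Complex.nonneg_iff.mp hφ₂.1.diag_nonneg).1)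
          (fun i j => hψ₁.1.re_trace_mul_nonneg (posSemidef_conjTranspose_mul_self (B i j)).nonneg)
          (fun i j => hψ₂.1.re_trace_mul_nonneg (posSemidef_self_mul_conjTranspose (B i j)).nonneg)
          hφ₁.sum_re_diag.le hφ₂.sum_re_diag.le
          (fun j => hψ₁.sum_re_trace_mul_le_one (sum_conjTranspose_mul_submatrix_le_one hW j))
          (fun i => hψ₂.sum_re_trace_mul_le_one (sum_mul_conjTranspose_submatrix_le_one hW i))
    _ = 2 * Fintype.card m * K := by ring

end Grothendieck

end Matrix

theorem ncgt_implies_traceNorm_bound_general (nA nB : ℕ)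
    (NCG : ∀ V : Matrix (Fin nA) (Fin nA) ℂ →ₗ[ℂ] Matrix (Fin nB) (Fin nB) ℂ →ₗ[ℂ] ℂ,
      ∃ φ₁ φ₂ : Matrix (Fin nA) (Fin nA) ℂ, ∃ ψ₁ ψ₂ : Matrix (Fin nB) (Fin nB) ℂ,
        φ₁.PosSemidef ∧ φ₁.trace = 1 ∧ φ₂.PosSemidef ∧ φ₂.trace = 1 ∧
        ψ₁.PosSemidef ∧ ψ₁.trace = 1 ∧ ψ₂.PosSemidef ∧ ψ₂.trace = 1 ∧
        ∀ x y, ‖V x y‖ ≤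
          (sSup {r : ℝ | ∃ a b, opNorm a ≤ 1 ∧ opNorm b ≤ 1 ∧ r = ‖V a b‖})
          * Real.sqrt (((φ₁ * (xᴴ * x)).trace).re + ((φ₂ * (x * xᴴ)).trace).re)
          * Real.sqrt (((ψ₁ * (yᴴ * y)).trace).re + ((ψ₂ * (y * yᴴ)).trace).re))
    (z : Matrix (Fin nA × Fin nB) (Fin nA × Fin nB) ℂ) :
    traceNorm z ≤ 2 * (nA : ℝ) * epsNorm z := by
  obtain ⟨φ₁, φ₂, ψ₁, ψ₂, hφ₁, hφ₁', hφ₂, hφ₂', hψ₁, hψ₁', hψ₂, hψ₂', hV⟩ :=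
    NCG (traceKroneckerForm z)
  obtain ⟨W, hW, htr⟩ := exists_opNorm_le_one_traceNorm_eq z
  have hK : 0 ≤ epsNorm z := Real.sSup_nonneg fun r ⟨_, _, _, _, hr⟩ => hr ▸ norm_nonneg _
  calc traceNorm z = (z * W).trace.re := htr
    _ ≤ ‖(z * W).trace‖ := Complex.re_le_norm _
    _ ≤ 2 * Fintype.card (Fin nA) * epsNorm z :=
        norm_trace_mul_le_of_grothendieck hK ⟨hφ₁, hφ₁'⟩ ⟨hφ₂, hφ₂'⟩ ⟨hψ₁, hψ₁'⟩ ⟨hψ₂, hψ₂'⟩ hV hW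
    _ = 2 * nA * epsNorm z := by rw [Fintype.card_fin]

/-- the noncommutative Grothendieck inequality (assumed for all
bilinear forms on `M_{n_A} × M_{n_B}`) implies `‖z‖₁ ≤ 2 n_A ‖V_z‖` when `n_A ≤ n_B`. -/
theorem ncgt_implies_traceNorm_bound (nA nB : ℕ) (hn : nA ≤ nB)
    (NCG : ∀ V : Matrix (Fin nA) (Fin nA) ℂ →ₗ[ℂ] Matrix (Fin nB) (Fin nB) ℂ →ₗ[ℂ] ℂ,
      ∃ φ₁ φ₂ : Matrix (Fin nA) (Fin nA) ℂ, ∃ ψ₁ ψ₂ : Matrix (Fin nB) (Fin nB) ℂ,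
        φ₁.PosSemidef ∧ φ₁.trace = 1 ∧ φ₂.PosSemidef ∧ φ₂.trace = 1 ∧
        ψ₁.PosSemidef ∧ ψ₁.trace = 1 ∧ ψ₂.PosSemidef ∧ ψ₂.trace = 1 ∧
        ∀ x y, ‖V x y‖ ≤
          (sSup {r : ℝ | ∃ a b, opNorm a ≤ 1 ∧ opNorm b ≤ 1 ∧ r = ‖V a b‖})
          * Real.sqrt (((φ₁ * (xᴴ * x)).trace).re + ((φ₂ * (x * xᴴ)).trace).re)
          * Real.sqrt (((ψ₁ * (yᴴ * y)).trace).re + ((ψ₂ * (y * yᴴ)).trace).re))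
    (z : Matrix (Fin nA × Fin nB) (Fin nA × Fin nB) ℂ) :
    traceNorm z ≤ 2 * (nA : ℝ) * epsNorm z :=
  ncgt_implies_traceNorm_bound_general nA nB NCG z
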